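/- arXiv:2503.14808 — 2 statements merged into one kernel-verified Lean document; each statement's English description precedes it below -/
import Mathlib

section
/- Let y : [0, ∞) → [0, ∞) be differentiable and suppose y'(t) ≤ C (1 + t)^{-1} y(t) + C (1 + t)^{-(N+1+s)} and additionally ∫₀ᵗ (1+τ)^{N+s-1+ε₀} y(τ) dτ ≤ C (1+t)^{ε₀} for some 0 < ε₀ < 1 and N + s > 0. Then y(t) ≤ C (1 + t)^{-(N+s)}. -/
open Real

/-- Time-weighted Grönwall argument (Step 3 of the proof of Theorem 1.2):
from `y' ≤ C(1+t)^{-1} y + C(1+t)^{-(N+1+s)}` together with the integrated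
lower-order bound `∫₀ᵗ (1+τ)^{N+s-1+ε₀} y dτ ≤ C(1+t)^{ε₀}`, one concludes
`y(t) ≤ C'(1+t)^{-(N+s)}`. -/
theorem stmt12 (y : ℝ → ℝ) (N s ε₀ C : ℝ) (hy : Differentiable ℝ y)
    (hpos : ∀ t, 0 ≤ t → 0 ≤ y t) (hNs : 0 < N + s) (hε₀ : 0 < ε₀) (hε₀' : ε₀ < 1)
    (hC : 0 < C)
    (hode : ∀ t, 0 ≤ t →
      deriv y t ≤ C * (1 + t) ^ (-(1:ℝ)) * y t + C * (1 + t) ^ (-(N + 1 + s)))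
    (hint : ∀ t, 0 ≤ t →
      (∫ τ in (0:ℝ)..t, (1 + τ) ^ (N + s - 1 + ε₀) * y τ) ≤ C * (1 + t) ^ ε₀) :
    ∃ C' > 0, ∀ t, 0 ≤ t → y t ≤ C' * (1 + t) ^ (-(N + s)) := by
  have hy_cont : Continuous y := hy.continuous
  set a : ℝ := N + s + ε₀ with ha_def
  have ha0 : 0 < a := by simp only [ha_def]; linarith
  -- globally continuous version of the integrand
  set φ : ℝ → ℝ := fun τ => (1 + max τ 0) ^ (a - 1) * y τ with hφ_def
  have hbase : ∀ τ : ℝ, (0:ℝ) < 1 + max τ 0 := fun τ => by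
    have : (0:ℝ) ≤ max τ 0 := le_max_right _ _
    linarith
  have hφ_cont : Continuous φ := by
    apply Continuous.mul _ hy_cont
    exact (continuous_const.add (continuous_id.max continuous_const)).rpow_const
      (fun τ => Or.inl (ne_of_gt (hbase τ)))
  set I : ℝ → ℝ := fun t => ∫ τ in (0:ℝ)..t, φ τ with hI_def
  have hI_deriv : ∀ t : ℝ, HasDerivAt I (φ t) t := fun t =>
    (hφ_cont.integral_hasStrictDerivAt 0 t).hasDerivAt
  have hI_bound : ∀ t, 0 ≤ t → I t ≤ C * (1 + t) ^ ε₀ := by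
    intro t ht
    have heq : I t = ∫ τ in (0:ℝ)..t, (1 + τ) ^ (N + s - 1 + ε₀) * y τ := by
      apply intervalIntegral.integral_congr
      intro τ hτ
      rw [Set.uIcc_of_le ht] at hτ
      have : max τ 0 = τ := max_eq_left hτ.1
      simp only [hφ_def, this]
      congr 1
      · congr 1; simp only [ha_def]; ring
    rw [heq]; exact hint t ht
  -- the comparison function
  set h : ℝ → ℝ := fun t => (a + C) * I t + (C / ε₀) * (1 + t) ^ ε₀ - (1 + t) ^ a * y t
    with hh_def
  have hcont_rpow : ∀ p : ℝ, ContinuousOn (fun t : ℝ => (1 + t) ^ p) (Set.Ici 0) := by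
    intro p t ht
    have h1 : (0:ℝ) < 1 + t := by simp at ht; linarith
    exact ((Real.continuousAt_rpow_const (1 + t) p (Or.inl (ne_of_gt h1))).comp
      (by fun_prop)).continuousWithinAt
  -- derivative facts at t > 0 (indeed t ≥ 0 works)
  have hW : ∀ p : ℝ, ∀ t : ℝ, 0 ≤ t →
      HasDerivAt (fun u => (1 + u) ^ p) (p * (1 + t) ^ (p - 1)) t := by
    intro p t ht
    have h1 : HasDerivAt (fun u : ℝ => 1 + u) 1 t := (hasDerivAt_id t).const_add 1
    have h2 := h1.rpow_const (p := p) (Or.inl (by positivity : (1:ℝ) + t ≠ 0))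
    simpa [mul_comm] using h2
  have hh_deriv : ∀ t : ℝ, 0 ≤ t → HasDerivAt h
      ((a + C) * φ t + (C / ε₀) * (ε₀ * (1 + t) ^ (ε₀ - 1))
        - (a * (1 + t) ^ (a - 1) * y t + (1 + t) ^ a * deriv y t)) t := by
    intro t ht
    exact (((hI_deriv t).const_mul (a + C)).add
      ((hW ε₀ t ht).const_mul (C / ε₀))).sub ((hW a t ht).mul (hy t).hasDerivAt)
  have hpos1 : ∀ t : ℝ, 0 ≤ t → (0:ℝ) < 1 + t := fun t ht => by linarith
  -- the derivative is nonneg on (0, ∞)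
  have hderiv_nonneg : ∀ t : ℝ, 0 ≤ t →
      0 ≤ (a + C) * φ t + (C / ε₀) * (ε₀ * (1 + t) ^ (ε₀ - 1))
        - (a * (1 + t) ^ (a - 1) * y t + (1 + t) ^ a * deriv y t) := by
    intro t ht
    have h1t := hpos1 t ht
    have hφt : φ t = (1 + t) ^ (a - 1) * y t := by
      simp only [hφ_def, max_eq_left ht]
    have hmul : (1 + t) ^ a * deriv y t ≤
        C * (1 + t) ^ (a - 1) * y t + C * (1 + t) ^ (ε₀ - 1) := by
      have := mul_le_mul_of_nonneg_left (hode t ht) (le_of_lt (rpow_pos_of_pos h1t a))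
      calc (1 + t) ^ a * deriv y t
          ≤ (1 + t) ^ a * (C * (1 + t) ^ (-(1:ℝ)) * y t + C * (1 + t) ^ (-(N + 1 + s))) :=
            this
        _ = C * ((1 + t) ^ a * (1 + t) ^ (-(1:ℝ))) * y t
            + C * ((1 + t) ^ a * (1 + t) ^ (-(N + 1 + s))) := by ring
        _ = C * (1 + t) ^ (a - 1) * y t + C * (1 + t) ^ (ε₀ - 1) := by
            rw [← Real.rpow_add h1t, ← Real.rpow_add h1t]
            congr 2 <;> · simp only [ha_def]; ring
    have hCe : (C / ε₀) * (ε₀ * (1 + t) ^ (ε₀ - 1)) = C * (1 + t) ^ (ε₀ - 1) := by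
      field_simp
    rw [hφt, hCe]
    nlinarith [hmul]
  -- h is monotone on [0, ∞)
  have hmono : MonotoneOn h (Set.Ici 0) := by
    apply monotoneOn_of_deriv_nonneg (convex_Ici 0)
    · have hI_cont : Continuous I :=
        continuous_iff_continuousAt.mpr (fun t => (hI_deriv t).continuousAt)
      apply ContinuousOn.sub
      · exact ((continuous_const.mul hI_cont).continuousOn).add
          (continuousOn_const.mul (hcont_rpow ε₀))
      · exact (hcont_rpow a).mul hy_cont.continuousOn
    · intro t ht
      rw [interior_Ici] at ht
      exact ((hh_deriv t (le_of_lt ht)).differentiableAt).differentiableWithinAt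
    · intro t ht
      rw [interior_Ici] at ht
      rw [(hh_deriv t (le_of_lt ht)).deriv]
      exact hderiv_nonneg t (le_of_lt ht)
  -- evaluate h at 0
  have hI0 : I 0 = 0 := intervalIntegral.integral_same
  have hh0 : h 0 = C / ε₀ - y 0 := by
    simp [hh_def, hI0]
  -- conclude the bound on (1+t)^a * y t
  set K : ℝ := (a + C) * C + C / ε₀ + y 0 with hK_def
  clear_value K
  have hy0 : 0 ≤ y 0 := hpos 0 le_rfl
  have hK0 : 0 < K := by
    have : 0 < (a + C) * C := by positivity
    have : 0 < C / ε₀ := by positivity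
    simp only [hK_def]; nlinarith [hpos 0 (le_refl (0:ℝ))]
  refine ⟨K, hK0, fun t ht => ?_⟩
  have h1t := hpos1 t ht
  have hmt := hmono (Set.self_mem_Ici) (Set.mem_Ici.mpr ht) ht
  rw [hh0] at hmt
  have hrge1 : (1:ℝ) ≤ (1 + t) ^ ε₀ := by
    apply Real.one_le_rpow (by linarith) (le_of_lt hε₀)
  have hfd : (1 + t) ^ a * y t ≤ K * (1 + t) ^ ε₀ := by
    have hIb := hI_bound t ht
    have haC : 0 < a + C := by linarith
    have h1 : (a + C) * I t ≤ (a + C) * (C * (1 + t) ^ ε₀) :=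
      mul_le_mul_of_nonneg_left hIb (le_of_lt haC)
    have h2 : y 0 ≤ y 0 * (1 + t) ^ ε₀ := le_mul_of_one_le_right hy0 hrge1
    have h3 : C / ε₀ * (1 + t) ^ ε₀ ≤ C / ε₀ * (1 + t) ^ ε₀ := le_rfl
    simp only [hh_def] at hmt
    have h4 : 0 ≤ C / ε₀ := div_nonneg hC.le hε₀.le
    calc (1 + t) ^ a * y t
        ≤ (a + C) * I t + C / ε₀ * (1 + t) ^ ε₀ - C / ε₀ + y 0 := by linarith [hmt]
      _ ≤ (a + C) * (C * (1 + t) ^ ε₀) + C / ε₀ * (1 + t) ^ ε₀ + y 0 * (1 + t) ^ ε₀ := by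
          nlinarith [h1, h2, h4]
      _ = K * (1 + t) ^ ε₀ := by simp only [hK_def]; ring
  -- divide by the weight
  have hwpos : (0:ℝ) < (1 + t) ^ a := rpow_pos_of_pos h1t a
  have := mul_le_mul_of_nonneg_right hfd (le_of_lt (rpow_pos_of_pos h1t (-a)))
  calc y t = ((1 + t) ^ a * y t) * (1 + t) ^ (-a) := by
        rw [mul_comm ((1+t)^a), mul_assoc, ← Real.rpow_add h1t]
        simp
    _ ≤ (K * (1 + t) ^ ε₀) * (1 + t) ^ (-a) := this
    _ = K * (1 + t) ^ (-(N + s)) := by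
        rw [mul_assoc, ← Real.rpow_add h1t]
        congr 2
        simp only [ha_def]; ring
end

section
/- Suppose ‖U(t)‖_{L²} ≥ c₂ (1+t)^{-3/4} and ‖Λ^{-1} U(t)‖_{L²} ≤ C (1+t)^{-1/4} for all sufficiently large t, where Λ^{-1} is the Fourier multiplier |ξ|^{-1}. Then for every integer k ≥ 0 there is a constant c_* > 0 such that ‖∇^k U(t)‖_{L²} ≥ c_* (1+t)^{-3/4 - k/2} for all sufficiently large t. -/
open MeasureTheory Real
open scoped ENNReal FourierTransform

noncomputable section

private lemma ae_ne_zero_E3 :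
    ∀ᵐ ξ : EuclideanSpace ℝ (Fin 3) ∂(volume), ξ ≠ 0 := by
  rw [ae_iff]
  simpa [Set.setOf_eq_eq_singleton] using
    measure_singleton (0 : EuclideanSpace ℝ (Fin 3))

private lemma interp_aux (f : EuclideanSpace ℝ (Fin 3) → ℂ)
    (hf : AEStronglyMeasurable f (volume : Measure (EuclideanSpace ℝ (Fin 3))))
    (k : ℕ) (hk : 0 < k) :
    eLpNorm f 2 volume ≤
      (eLpNorm (fun ξ => ‖ξ‖ ^ (-1:ℝ) • f ξ) 2 volume) ^ ((k:ℝ)/((k:ℝ)+1)) *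
      (eLpNorm (fun ξ => ‖ξ‖ ^ (k:ℝ) • f ξ) 2 volume) ^ (1/((k:ℝ)+1)) := by
  have hkR : (0:ℝ) < k := by exact_mod_cast hk
  have hk1 : (0:ℝ) < (k:ℝ)+1 := by positivity
  set θ : ℝ := (k:ℝ)/((k:ℝ)+1) with hθdef
  have hθ0 : 0 < θ := by positivity
  have hθ1 : θ < 1 := by rw [hθdef, div_lt_one hk1]; linarith
  set g : EuclideanSpace ℝ (Fin 3) → ℝ≥0∞ := fun ξ => (‖f ξ‖₊ : ℝ≥0∞) with hgdef
  set h : EuclideanSpace ℝ (Fin 3) → ℝ≥0∞ := fun ξ => (‖ξ‖₊ : ℝ≥0∞) with hhdef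
  have hg : AEMeasurable g volume := hf.enorm
  have hh : Measurable h := measurable_nnnorm.coe_nnreal_ennreal
  set A : ℝ≥0∞ := ∫⁻ ξ, g ξ ^ (2:ℝ) with hAdef
  set B : ℝ≥0∞ := ∫⁻ ξ, (h ξ ^ (-1:ℝ) * g ξ) ^ (2:ℝ) with hBdef
  set D : ℝ≥0∞ := ∫⁻ ξ, (h ξ ^ (k:ℝ) * g ξ) ^ (2:ℝ) with hDdef
  -- Step 1 : Hölder
  have key : A ≤ B ^ θ * D ^ (1-θ) := by
    have hpq : (((k:ℝ)+1)/k).HolderConjugate ((k:ℝ)+1) := by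
      rw [Real.holderConjugate_iff]
      constructor
      · rw [lt_div_iff₀ hkR]; linarith
      · field_simp
    set u : EuclideanSpace ℝ (Fin 3) → ℝ≥0∞ :=
      fun ξ => (h ξ ^ (-1:ℝ) * g ξ) ^ (2*θ) with hudef
    set v : EuclideanSpace ℝ (Fin 3) → ℝ≥0∞ :=
      fun ξ => (h ξ ^ (k:ℝ) * g ξ) ^ (2*(1-θ)) with hvdef
    have hu : AEMeasurable u volume := ((hh.pow_const _).aemeasurable.mul hg).pow_const _
    have hv : AEMeasurable v volume := ((hh.pow_const _).aemeasurable.mul hg).pow_const _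
    have hAeq : A = ∫⁻ ξ, (u * v) ξ := by
      refine lintegral_congr_ae ?_
      filter_upwards [ae_ne_zero_E3] with ξ hξ
      have hx0 : h ξ ≠ 0 := by
        simp only [hhdef, ne_eq, ENNReal.coe_eq_zero, nnnorm_eq_zero]
        exact hξ
      have hxt : h ξ ≠ ∞ := ENNReal.coe_ne_top
      have hyt : g ξ ≠ ∞ := ENNReal.coe_ne_top
      have hxs : (h ξ ^ (-1:ℝ)) ^ (2*θ) * (h ξ ^ (k:ℝ)) ^ (2*(1-θ)) = 1 := by
        rw [← ENNReal.rpow_mul, ← ENNReal.rpow_mul,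
          ← ENNReal.rpow_add _ _ hx0 hxt]
        have : -1 * (2*θ) + (k:ℝ) * (2*(1-θ)) = 0 := by
          rw [hθdef]; field_simp; ring
        rw [this, ENNReal.rpow_zero]
      have hys : g ξ ^ (2*θ) * g ξ ^ (2*(1-θ)) = g ξ ^ (2:ℝ) := by
        rcases eq_or_ne (g ξ) 0 with h0 | h0
        · rw [h0, ENNReal.zero_rpow_of_pos (by positivity),
            ENNReal.zero_rpow_of_pos (by linarith), ENNReal.zero_rpow_of_pos (by norm_num),
            mul_zero]
        · rw [← ENNReal.rpow_add _ _ h0 hyt]; ring_nf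
      simp only [Pi.mul_apply, hudef, hvdef]
      rw [ENNReal.mul_rpow_of_nonneg _ _ (by positivity),
        ENNReal.mul_rpow_of_nonneg _ _ (by linarith : (0:ℝ) ≤ 2*(1-θ)),
        mul_mul_mul_comm, hxs, hys, one_mul]
    have hold := ENNReal.lintegral_mul_le_Lp_mul_Lq volume hpq hu hv
    rw [hAeq]
    refine hold.trans (le_of_eq ?_)
    have h1 : ∀ ξ, u ξ ^ (((k:ℝ)+1)/k) = (h ξ ^ (-1:ℝ) * g ξ) ^ (2:ℝ) := by
      intro ξ
      rw [hudef, ← ENNReal.rpow_mul]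
      congr 1
      rw [hθdef]; field_simp
    have h2 : ∀ ξ, v ξ ^ ((k:ℝ)+1) = (h ξ ^ (k:ℝ) * g ξ) ^ (2:ℝ) := by
      intro ξ
      rw [hvdef, ← ENNReal.rpow_mul]
      congr 1
      rw [hθdef]; field_simp; ring
    have e1 : 1/(((k:ℝ)+1)/k) = θ := by rw [hθdef]; field_simp
    have e2 : 1/((k:ℝ)+1) = 1 - θ := by rw [hθdef]; field_simp; ring
    simp only [h1, h2, e1, e2, hBdef, hDdef]
  -- Step 2 : identify eLpNorms
  have hA : eLpNorm f 2 volume = A ^ (1/2:ℝ) := by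
    rw [eLpNorm_eq_lintegral_rpow_enorm_toReal two_ne_zero ENNReal.ofNat_ne_top]
    norm_num [hAdef, hgdef, enorm_eq_nnnorm]
  have hB : eLpNorm (fun ξ => ‖ξ‖ ^ (-1:ℝ) • f ξ) 2 volume = B ^ (1/2:ℝ) := by
    rw [eLpNorm_eq_lintegral_rpow_enorm_toReal two_ne_zero ENNReal.ofNat_ne_top,
      show ((2:ℝ≥0∞).toReal) = (2:ℝ) by norm_num, hBdef]
    congr 1
    refine lintegral_congr_ae ?_
    filter_upwards [ae_ne_zero_E3] with ξ hξ
    have hpt : (‖‖ξ‖ ^ (-1:ℝ) • f ξ‖₊ : ℝ≥0∞) = h ξ ^ (-1:ℝ) * g ξ := by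
      rw [nnnorm_smul, ENNReal.coe_mul]
      congr 1
      rw [← enorm_eq_nnnorm, ← ofReal_norm, Real.norm_eq_abs,
        abs_of_nonneg (Real.rpow_nonneg (norm_nonneg _) _),
        ← ENNReal.ofReal_rpow_of_pos (norm_pos_iff.mpr hξ)]
      simp only [hhdef, ofReal_norm, enorm_eq_nnnorm]
    rw [enorm_eq_nnnorm, hpt]
  have hD : eLpNorm (fun ξ => ‖ξ‖ ^ (k:ℝ) • f ξ) 2 volume = D ^ (1/2:ℝ) := by
    rw [eLpNorm_eq_lintegral_rpow_enorm_toReal two_ne_zero ENNReal.ofNat_ne_top,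
      show ((2:ℝ≥0∞).toReal) = (2:ℝ) by norm_num, hDdef]
    congr 1
    refine lintegral_congr_ae ?_
    filter_upwards [ae_ne_zero_E3] with ξ hξ
    have hpt : (‖‖ξ‖ ^ (k:ℝ) • f ξ‖₊ : ℝ≥0∞) = h ξ ^ (k:ℝ) * g ξ := by
      rw [nnnorm_smul, ENNReal.coe_mul]
      congr 1
      rw [← enorm_eq_nnnorm, ← ofReal_norm, Real.norm_eq_abs,
        abs_of_nonneg (Real.rpow_nonneg (norm_nonneg _) _),
        ← ENNReal.ofReal_rpow_of_pos (norm_pos_iff.mpr hξ)]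
      simp only [hhdef, ofReal_norm, enorm_eq_nnnorm]
    rw [enorm_eq_nnnorm, hpt]
  -- Step 3 : combine
  rw [hA, hB, hD]
  calc A ^ (1/2:ℝ) ≤ (B ^ θ * D ^ (1-θ)) ^ (1/2:ℝ) :=
        ENNReal.rpow_le_rpow key (by norm_num)
    _ = (B ^ (1/2:ℝ)) ^ θ * (D ^ (1/2:ℝ)) ^ (1-θ) := by
        rw [ENNReal.mul_rpow_of_nonneg _ _ (by norm_num : (0:ℝ) ≤ 1/2),
          ← ENNReal.rpow_mul, ← ENNReal.rpow_mul, ← ENNReal.rpow_mul, ← ENNReal.rpow_mul,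
          mul_comm θ, mul_comm (1-θ)]
    _ = (B ^ (1/2:ℝ)) ^ θ * (D ^ (1/2:ℝ)) ^ (1/((k:ℝ)+1)) := by
        congr 1
        rw [hθdef]
        congr 1
        field_simp
        ring

/-- Step 3 of the proof of Theorem 1.3: from the lower bound
`‖U(t)‖_{L²} ≥ c₂(1+t)^{-3/4}` and the upper bound
`‖Λ^{-1}U(t)‖_{L²} ≤ C(1+t)^{-1/4}` for large `t` (with `Λ^{-1}` the Fourier
multiplier `|ξ|^{-1}`, and Plancherel's identity relating `U` to `𝓕 U`),
every spatial derivative obeys `‖∇^k U(t)‖_{L²} ≥ c_*(1+t)^{-3/4-k/2}`. -/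
theorem stmt15 (U : ℝ → EuclideanSpace ℝ (Fin 3) → ℂ) (c₂ C T : ℝ)
    (hc₂ : 0 < c₂) (hC : 0 < C) (hT : 0 ≤ T)
    (hmeas : ∀ t, T ≤ t →
      AEStronglyMeasurable (𝓕 (U t)) (volume : Measure (EuclideanSpace ℝ (Fin 3))))
    (hplanch : ∀ t, T ≤ t → eLpNorm (𝓕 (U t)) 2 volume = eLpNorm (U t) 2 volume)
    (hlowbd : ∀ t, T ≤ t →
      ENNReal.ofReal (c₂ * (1 + t) ^ (-(3:ℝ)/4)) ≤ eLpNorm (U t) 2 volume)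
    (hupbd : ∀ t, T ≤ t →
      eLpNorm (fun ξ => ‖ξ‖ ^ (-1 : ℝ) • 𝓕 (U t) ξ) 2 volume ≤
        ENNReal.ofReal (C * (1 + t) ^ (-(1:ℝ)/4))) :
    ∀ k : ℕ, ∃ cs > 0, ∃ T' : ℝ, ∀ t, T' ≤ t →
      ENNReal.ofReal (cs * (1 + t) ^ (-(3:ℝ)/4 - (k : ℝ)/2)) ≤
        eLpNorm (fun ξ => ‖ξ‖ ^ (k : ℝ) • 𝓕 (U t) ξ) 2 volume := by
  intro k
  rcases Nat.eq_zero_or_pos k with hk0 | hk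
  · subst hk0
    refine ⟨c₂, hc₂, T, fun t ht => ?_⟩
    have h1 : (fun ξ : EuclideanSpace ℝ (Fin 3) => ‖ξ‖ ^ (((0:ℕ)):ℝ) • 𝓕 (U t) ξ)
        = 𝓕 (U t) := by
      funext ξ; simp
    rw [h1, hplanch t ht]
    have h2 := hlowbd t ht
    norm_num at h2 ⊢
    exact h2
  · set θ : ℝ := (k:ℝ)/((k:ℝ)+1) with hθdef
    have hkR : (0:ℝ) < k := by exact_mod_cast hk
    have hk1 : (0:ℝ) < (k:ℝ)+1 := by positivity
    have hθ0 : (0:ℝ) ≤ θ := by positivity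
    refine ⟨c₂ ^ ((k:ℝ)+1) / C ^ (k:ℝ), by positivity, T, fun t ht => ?_⟩
    have h1t : (0:ℝ) < 1 + t := by linarith [hT.trans ht]
    set La : ℝ := c₂ * (1+t) ^ (-(3:ℝ)/4) with hLa
    set Ub : ℝ := C * (1+t) ^ (-(1:ℝ)/4) with hUb
    have hLap : 0 < La := by positivity
    have hUbp : 0 < Ub := by positivity
    set D' := eLpNorm (fun ξ => ‖ξ‖ ^ (k:ℝ) • 𝓕 (U t) ξ) 2 volume with hD'
    have hint := interp_aux (𝓕 (U t)) (hmeas t ht) k hk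
    rw [hplanch t ht] at hint
    have step1 : ENNReal.ofReal La ≤
        (ENNReal.ofReal Ub) ^ θ * D' ^ (1/((k:ℝ)+1)) := by
      refine (hlowbd t ht).trans (hint.trans ?_)
      exact mul_le_mul_left (ENNReal.rpow_le_rpow (hupbd t ht) hθ0) _
    have hXpos : (0:ℝ≥0∞) < (ENNReal.ofReal Ub) ^ θ :=
      ENNReal.rpow_pos (ENNReal.ofReal_pos.mpr hUbp) ENNReal.ofReal_ne_top
    have hXt : (ENNReal.ofReal Ub) ^ θ ≠ ∞ :=
      ENNReal.rpow_ne_top_of_nonneg hθ0 ENNReal.ofReal_ne_top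
    have step2 : ENNReal.ofReal La / (ENNReal.ofReal Ub) ^ θ ≤ D' ^ (1/((k:ℝ)+1)) := by
      rw [ENNReal.div_le_iff_le_mul (Or.inl (ne_of_gt hXpos)) (Or.inl hXt)]
      rwa [mul_comm] at step1
    have step3 : (ENNReal.ofReal La / (ENNReal.ofReal Ub) ^ θ) ^ ((k:ℝ)+1) ≤ D' := by
      have h3 := ENNReal.rpow_le_rpow step2 (le_of_lt hk1)
      rwa [← ENNReal.rpow_mul, one_div, inv_mul_cancel₀ (ne_of_gt hk1),
        ENNReal.rpow_one] at h3
    refine le_trans (le_of_eq ?_) step3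
    rw [ENNReal.div_rpow_of_nonneg _ _ (le_of_lt hk1), ← ENNReal.rpow_mul,
      ENNReal.ofReal_rpow_of_pos hLap, ENNReal.ofReal_rpow_of_pos hUbp,
      ← ENNReal.ofReal_div_of_pos (Real.rpow_pos_of_pos hUbp _)]
    congr 1
    have hθk : θ * ((k:ℝ)+1) = (k:ℝ) := by rw [hθdef]; field_simp
    rw [hθk, hLa, hUb,
      Real.mul_rpow (le_of_lt hc₂) (Real.rpow_nonneg (le_of_lt h1t) _),
      Real.mul_rpow (le_of_lt hC) (Real.rpow_nonneg (le_of_lt h1t) _),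
      ← Real.rpow_mul (le_of_lt h1t), ← Real.rpow_mul (le_of_lt h1t),
      ← div_mul_div_comm, ← Real.rpow_sub h1t]
    congr 1
    ring_nf
end
end
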